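/- arXiv:2111.01843 — 5 statements merged into one kernel-verified Lean document; each statement's English description precedes it below -/
import Mathlib

section
/- Every uniform orchard O ⊂ ℝ^{d+1}\{0} has an empty set of visible points: for every x ∈ ℝ^{d+1}, every direction v ∈ S^d, and every ε > 0, the ray L(x,v) = {x + t·v : t ≥ 0} comes within distance ε of some point of O\{x}; equivalently dist₂(L(x,v), O\{x}) = 0. -/
noncomputable section

def FiniteDensity {d : ℕ} (S : Set (EuclideanSpace ℝ (Fin (d+1)))) : Prop :=
  ∃ C > (0:ℝ), ∀ T ≥ (1:ℝ),
    ((S ∩ Metric.closedBall 0 T).ncard : ℝ) ≤ C * T ^ (d+1)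

/-- `O` is a uniform orchard with visibility function `V`. -/
def IsUniformOrchard {d : ℕ} (O : Set (EuclideanSpace ℝ (Fin (d+1)))) (V : ℝ → ℝ) : Prop :=
  FiniteDensity O ∧
    ∀ ε ∈ Set.Ioo (0:ℝ) 1, ∀ t₀ : ℝ, ∀ v : EuclideanSpace ℝ (Fin (d+1)), ‖v‖ = 1 →
      ∃ o ∈ O, ∃ t : ℝ, t₀ < t ∧ t < t₀ + V ε ∧ ‖o - t • v‖ ≤ ε

/-!
Far out along the ray `x + t • v`, at a point `y`, the ray is almost parallel to the ray from the
origin through `y`: their directions differ by at most `2 ‖x‖ / ‖y‖`. Hence along a window of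
fixed length `K` beyond `y` the two rays stay within `2 K ‖x‖ / ‖y‖` of each other, which is small
once `‖y‖` is large. The orchard property, applied to the ray from the origin with window length
`K = V ε`, provides an orchard point near that window; it is near the ray from `x` as well, and it
is not `x` because it is much farther from the origin.
-/

section RayGeometry

variable {E : Type*} [NormedAddCommGroup E] [NormedSpace ℝ E]

lemma norm_norm_smul_sub_add_smul_le (x : E) {v : E} (hv : ‖v‖ = 1) {T : ℝ} (hT : 0 ≤ T) :
    ‖‖x + T • v‖ • v - (x + T • v)‖ ≤ 2 * ‖x‖ := by
  have hnorm : |‖x + T • v‖ - T| ≤ ‖x‖ := by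
    simpa [norm_smul, hv, abs_of_nonneg hT] using abs_norm_sub_norm_le (x + T • v) (T • v)
  calc ‖‖x + T • v‖ • v - (x + T • v)‖ = ‖(‖x + T • v‖ - T) • v - x‖ := by congr 1; module
    _ ≤ |‖x + T • v‖ - T| + ‖x‖ := by
        simpa [norm_smul, hv] using norm_sub_le ((‖x + T • v‖ - T) • v) x
    _ ≤ 2 * ‖x‖ := by linarith

lemma norm_mul_norm_add_smul_sub_smul_le (x : E) {v : E} (hv : ‖v‖ = 1) {T u : ℝ} (hT : 0 ≤ T)
    (hu : 0 ≤ u) :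
    ‖x + T • v‖ * ‖x + (T + u) • v - (‖x + T • v‖ + u) • ‖x + T • v‖⁻¹ • (x + T • v)‖ ≤
      2 * u * ‖x‖ := by
  set r := ‖x + T • v‖
  rcases (norm_nonneg _ : 0 ≤ r).eq_or_lt with hr | hr
  · rw [show r = 0 from hr.symm, zero_mul]; positivity
  have hscale : r • ((r + u) • r⁻¹ • (x + T • v)) = (r + u) • (x + T • v) := by
    rw [smul_comm r (r + u), smul_inv_smul₀ hr.ne']
  calc r * ‖x + (T + u) • v - (r + u) • r⁻¹ • (x + T • v)‖
      = ‖r • (x + (T + u) • v - (r + u) • r⁻¹ • (x + T • v))‖ := by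
        rw [norm_smul, Real.norm_of_nonneg hr.le]
    _ = u * ‖r • v - (x + T • v)‖ := by
        rw [smul_sub, hscale, show r • (x + (T + u) • v) - (r + u) • (x + T • v) =
          u • (r • v - (x + T • v)) by module, norm_smul, Real.norm_of_nonneg hu]
    _ ≤ u * (2 * ‖x‖) := by gcongr; exact norm_norm_smul_sub_add_smul_le x hv hT
    _ = 2 * u * ‖x‖ := by ring

lemma exists_far_window_near_ray (x : E) {v : E} (hv : ‖v‖ = 1) (K : ℝ) {δ : ℝ} (hδ : 0 < δ)
    (M : ℝ) :
    ∃ w : E, ‖w‖ = 1 ∧ ∃ r ≥ M, ∀ s, r ≤ s → s ≤ r + K →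
      ∃ t : ℝ, 0 ≤ t ∧ ‖x + t • v - s • w‖ ≤ δ := by
  set T := ‖x‖ + max M 1 + 2 * ‖x‖ * |K| / δ
  have hT : 0 ≤ T := by positivity
  set r := ‖x + T • v‖
  have hr : T - ‖x‖ ≤ r := by
    have := norm_sub_norm_le (T • v) (-x)
    rw [sub_neg_eq_add, add_comm, norm_neg, norm_smul, hv, mul_one, Real.norm_of_nonneg hT] at this
    linarith
  have hslack : 0 ≤ 2 * ‖x‖ * |K| / δ := by positivity
  have hr_pos : 0 < r := by linarith [le_max_right M 1]
  have hr_M : M ≤ r := by linarith [le_max_left M 1]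
  have hr_δ : 2 * ‖x‖ * |K| ≤ r * δ := by
    rw [← div_le_iff₀ hδ]; linarith [le_max_right M 1]
  refine ⟨r⁻¹ • (x + T • v), norm_smul_inv_norm (norm_pos_iff.mp hr_pos), r, hr_M,
    fun s hrs hsK => ⟨T + (s - r), by linarith, ?_⟩⟩
  have hdist := norm_mul_norm_add_smul_sub_smul_le x hv hT (sub_nonneg.mpr hrs)
  rw [add_sub_cancel] at hdist
  refine le_of_mul_le_mul_left ?_ hr_pos
  calc _ ≤ 2 * (s - r) * ‖x‖ := hdist
    _ ≤ 2 * ‖x‖ * |K| := by nlinarith [le_abs_self K, norm_nonneg x]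
    _ ≤ r * δ := hr_δ

end RayGeometry

theorem uniformOrchard_no_visible_points_general (d : ℕ)
    (O : Set (EuclideanSpace ℝ (Fin (d+1))))
    (V : ℝ → ℝ)
    (hO : IsUniformOrchard O V) :
    ∀ x : EuclideanSpace ℝ (Fin (d+1)), ∀ v : EuclideanSpace ℝ (Fin (d+1)), ‖v‖ = 1 →
      ∀ ε > (0:ℝ), ∃ o ∈ O, o ≠ x ∧ ∃ t : ℝ, 0 ≤ t ∧ ‖x + t • v - o‖ ≤ ε := by
  intro x v hv ε hε
  obtain ⟨ε₁, hε₁_pos, hε₁_le, hε₁_le_half⟩ : ∃ ε₁ : ℝ, 0 < ε₁ ∧ ε₁ ≤ ε / 2 ∧ ε₁ ≤ 1 / 2 :=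
    ⟨min (ε / 2) (1 / 2), by positivity, min_le_left _ _, min_le_right _ _⟩
  have hε₁ : ε₁ ∈ Set.Ioo (0 : ℝ) 1 := ⟨hε₁_pos, by linarith⟩
  obtain ⟨w, hw, r, hr, hnear⟩ := exists_far_window_near_ray x hv (V ε₁) (half_pos hε) (‖x‖ + 1)
  obtain ⟨o, ho, s, hrs, hsK, hos⟩ := hO.2 ε₁ hε₁ r w hw
  obtain ⟨t, ht, hts⟩ := hnear s hrs.le hsK.le
  refine ⟨o, ho, ?_, t, ht, ?_⟩
  · have hsw : ‖s • w‖ = s := by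
      rw [norm_smul, hw, mul_one, Real.norm_of_nonneg (by linarith [norm_nonneg x])]
    have := norm_sub_norm_le (s • w) o
    rw [hsw, norm_sub_rev] at this
    rintro rfl
    linarith
  · calc ‖x + t • v - o‖ ≤ ‖x + t • v - s • w‖ + ‖o - s • w‖ := by
          simpa [norm_sub_rev o] using norm_sub_le_norm_sub_add_norm_sub (x + t • v) (s • w) o
      _ ≤ ε := by linarith

/-- A uniform orchard has an empty set of visible points: every ray comes
arbitrarily close to the set (minus the base point of the ray). -/
theorem uniformOrchard_no_visible_points (d : ℕ)
    (O : Set (EuclideanSpace ℝ (Fin (d+1)))) (h0 : (0:EuclideanSpace ℝ (Fin (d+1))) ∉ O)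
    (V : ℝ → ℝ) (hVpos : ∀ ε ∈ Set.Ioo (0:ℝ) 1, 0 < V ε)
    (hV : AntitoneOn V (Set.Ioo (0:ℝ) 1))
    (hO : IsUniformOrchard O V) :
    ∀ x : EuclideanSpace ℝ (Fin (d+1)), ∀ v : EuclideanSpace ℝ (Fin (d+1)), ‖v‖ = 1 →
      ∀ ε > (0:ℝ), ∃ o ∈ O, o ≠ x ∧ ∃ t : ℝ, 0 ≤ t ∧ ‖x + t • v - o‖ ≤ ε :=
  uniformOrchard_no_visible_points_general d O V hO
end
end

section
/- Let Λ = { √n · e^{2πi p/k} : n ≥ 1 } ⊂ ℂ ≅ ℝ², where for each n ≥ 1 the integers k ≥ 1 and 0 ≤ p ≤ k are determined by the unique decomposition n = k(k+1)/2 + p. Then Λ is an orchard with visibility function V(ε) ≤ C·ε^{−1} for some constant C > 0: for every ε ∈ (0,1) and every θ ∈ [0,1] there exist a point z ∈ Λ and 0 < t < C·ε^{−1} with |z − t·e^{2πiθ}| ≤ ε. -/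
/-!
Given `ε` and `θ`, Dirichlet's theorem with `N ≈ 4π/ε` yields `p/k` with `k ≤ N` and
`|θ - p/k| ≤ 1/(k(N+1))`; this `p/k` is the angle of the point of `Λ` with index
`n = k(k+1)/2 + p`, whose modulus `√n` is at most `2k`. Taking `t = √n`, the distance to the
ray of angle `2πθ` is at most `√n · 2π|θ - p/k| ≤ 4π/(N+1) ≤ ε`, while `t ≤ 2N = O(1/ε)`.
-/

noncomputable section

open Complex Real

/-- The planar spiral `Λ = { √n · e^{2πi p/k} }` where `n = k(k+1)/2 + p`,
`k ≥ 1`, `0 ≤ p ≤ k`. -/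
def Lam : Set ℂ :=
  {z | ∃ n k p : ℕ, 1 ≤ n ∧ 1 ≤ k ∧ p ≤ k ∧ n = k * (k+1) / 2 + p ∧
    z = (Real.sqrt n : ℂ) * Complex.exp (2 * Real.pi * Complex.I * ((p : ℂ) / (k : ℂ)))}

theorem one_le_triangle_add {k : ℕ} (hk : 0 < k) (p : ℕ) : 1 ≤ k * (k + 1) / 2 + p := by
  have htri : 1 ≤ k * (k + 1) / 2 := (Nat.le_div_iff_mul_le two_pos).2 (by nlinarith)
  omega

theorem sqrt_mul_exp_mem_Lam {k p : ℕ} (hk : 0 < k) (hpk : p ≤ k) :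
    (√(k * (k + 1) / 2 + p : ℕ) : ℂ) * exp (2 * π * I * ((p : ℂ) / (k : ℂ))) ∈ Lam :=
  ⟨_, k, p, one_le_triangle_add hk p, hk, hpk, rfl, rfl⟩

theorem sqrt_triangle_add_le {k p : ℕ} (hpk : p ≤ k) :
    √(k * (k + 1) / 2 + p : ℕ) ≤ 2 * k := by
  have hn : k * (k + 1) / 2 + p ≤ (2 * k) ^ 2 := by
    have := Nat.div_le_self (k * (k + 1)) 2
    nlinarith
  rw [Real.sqrt_le_left (by positivity)]
  exact_mod_cast hn

theorem norm_exp_two_pi_I_sub_le (x y : ℝ) :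
    ‖exp (2 * π * I * x) - exp (2 * π * I * y)‖ ≤ 2 * π * |x - y| := by
  have hfactor : exp (2 * π * I * x) - exp (2 * π * I * y)
      = exp (↑(2 * π * y) * I) * (exp (I * ↑(2 * π * (x - y))) - 1) := by
    rw [mul_sub, ← Complex.exp_add]
    push_cast
    ring_nf
  rw [hfactor, norm_mul, Complex.norm_exp_ofReal_mul_I, one_mul]
  calc ‖exp (I * ↑(2 * π * (x - y))) - 1‖ ≤ ‖2 * π * (x - y)‖ :=
        Real.norm_exp_I_mul_ofReal_sub_one_le
    _ = 2 * π * |x - y| := by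
        rw [Real.norm_eq_abs, abs_mul, abs_of_pos (by positivity : 0 < 2 * π)]

theorem exists_nat_div_approx_of_mem_Icc {θ : ℝ} (hθ : θ ∈ Set.Icc (0 : ℝ) 1) {N : ℕ}
    (hN : 0 < N) :
    ∃ k p : ℕ, 0 < k ∧ k ≤ N ∧ p ≤ k ∧ |(p : ℝ) / k - θ| ≤ 1 / (k * (N + 1)) := by
  obtain ⟨j, k, hk, hkN, hjk⟩ := Real.exists_int_int_abs_mul_sub_le θ hN
  obtain ⟨hθ0, hθ1⟩ := hθ
  have hlt : 1 / ((N : ℝ) + 1) < 1 := by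
    rw [div_lt_one (by positivity)]
    exact_mod_cast Nat.lt_succ_of_le hN
  lift k to ℕ using hk.le
  push_cast at hjk
  obtain ⟨hlo, hhi⟩ := abs_le.mp hjk
  have hj0 : ((-1 : ℤ) : ℝ) < j := by push_cast; nlinarith
  have hjk' : (j : ℝ) < ((k + 1 : ℤ) : ℝ) := by push_cast; nlinarith
  lift j to ℕ using by exact_mod_cast hj0
  have hkR : (0 : ℝ) < k := by exact_mod_cast hk
  refine ⟨k, j, by exact_mod_cast hk, by exact_mod_cast hkN,
    Nat.lt_succ_iff.1 (by exact_mod_cast hjk'), ?_⟩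
  have hdiff : (j : ℝ) / k - θ = -((k : ℝ) * θ - j) / k := by field_simp; ring
  rw [hdiff, abs_div, abs_neg, abs_of_pos hkR, div_le_iff₀ hkR]
  calc |(k : ℝ) * θ - j| ≤ 1 / (N + 1) := hjk
    _ = 1 / (k * (N + 1)) * k := by field_simp

theorem Lam_orchard_visibility :
    ∃ C > (0:ℝ), ∀ ε ∈ Set.Ioo (0:ℝ) 1, ∀ θ ∈ Set.Icc (0:ℝ) 1,
      ∃ z ∈ Lam, ∃ t : ℝ, 0 < t ∧ t < C / ε ∧
        ‖z - (t : ℂ) * Complex.exp (2 * Real.pi * Complex.I * (θ : ℂ))‖ ≤ ε := by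
  refine ⟨2 * (4 * π + 1), by positivity, ?_⟩
  rintro ε ⟨hε0, hε1⟩ θ hθ
  set N := ⌈4 * π / ε⌉₊
  have hNpos : 0 < N := Nat.ceil_pos.mpr (by positivity)
  have hN_large : 4 * π < ε * (N + 1) := by
    have := Nat.le_ceil (4 * π / ε)
    rw [div_le_iff₀ hε0] at this
    nlinarith
  have hN_small : ε * N < 4 * π + ε := by
    have := Nat.ceil_lt_add_one (by positivity : 0 ≤ 4 * π / ε)
    rw [← lt_div_iff₀' hε0, add_div, div_self hε0.ne']
    exact this
  obtain ⟨k, p, hk, hkN, hpk, happrox⟩ := exists_nat_div_approx_of_mem_Icc hθ hNpos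
  have hkR : (0 : ℝ) < k := by exact_mod_cast hk
  have hkNR : (k : ℝ) ≤ N := by exact_mod_cast hkN
  have ht := sqrt_triangle_add_le hpk
  refine ⟨_, sqrt_mul_exp_mem_Lam hk hpk, √(k * (k + 1) / 2 + p : ℕ),
    Real.sqrt_pos.2 (by exact_mod_cast one_le_triangle_add hk p), ?_, ?_⟩
  · rw [lt_div_iff₀ hε0]
    calc _ ≤ 2 * k * ε := by gcongr
      _ ≤ 2 * (ε * N) := by nlinarith
      _ < 2 * (4 * π + 1) := by linarith
  · rw [← mul_sub, norm_mul, Complex.norm_real, Real.norm_of_nonneg (Real.sqrt_nonneg _)]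
    have hexp := norm_exp_two_pi_I_sub_le (p / k) θ
    push_cast at hexp
    calc _ ≤ 2 * k * (2 * π * (1 / (k * (N + 1)))) := by gcongr; exact hexp.trans (by gcongr)
      _ = 4 * π / (N + 1) := by field_simp; ring
      _ ≤ ε := by rw [div_le_iff₀ (by positivity)]; exact hN_large.le
end
end

section
/- The planar spiral Λ = { √n·(cos(2πp/k), sin(2πp/k)) : n ≥ 1 } (with n = k(k+1)/2 + p, k ≥ 1, 0 ≤ p ≤ k) has a non-empty set of visible points: there exists δ > 0 such that no point of Λ has second coordinate in the open interval (0, δ); consequently any point (x, δ/2) is visible in the horizontal direction (1,0). -/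
noncomputable section

open Complex Real

/-!
For `z = √n · exp (2πi p/k) ∈ Λ` we have `Im z = √n · sin (2π p/k)`. If `p = 0` or `k ≤ 2p` the
angle lies in `[π, 2π]` (or is `0`), so `Im z ≤ 0`. Otherwise `1 ≤ p < k/2`, and Jordan's
inequality gives `sin (2π p/k) ≥ 4 · min (p/k) (1/2 - p/k) ≥ 2/k`, while `n ≥ k(k+1)/2` gives
`√n ≥ k/2`; hence `Im z ≥ 1`. So no point of `Λ` lies in the strip `0 < Im < 1`, and the
horizontal ray from any point at height `1/2` keeps distance `1/2` from `Λ`.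
-/

theorem Real.four_mul_le_sin_two_pi_mul {x : ℝ} (hx₀ : 0 ≤ x) (hx₁ : x ≤ 1 / 4) :
    4 * x ≤ sin (2 * π * x) := by
  calc 4 * x = 2 / π * (2 * π * x) := by field_simp; ring
    _ ≤ sin (2 * π * x) := mul_le_sin (by positivity) (by nlinarith [pi_pos])

theorem Real.four_mul_min_le_sin_two_pi_mul {x : ℝ} (hx₀ : 0 ≤ x) (hx₁ : x ≤ 1 / 2) :
    4 * min x (1 / 2 - x) ≤ sin (2 * π * x) := by
  rcases le_total x (1 / 4) with hx | hx
  · exact (mul_le_mul_of_nonneg_left (min_le_left _ _) (by norm_num)).trans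
      (four_mul_le_sin_two_pi_mul hx₀ hx)
  · have hsym : sin (2 * π * x) = sin (2 * π * (1 / 2 - x)) := by
      rw [← sin_pi_sub]; ring_nf
    rw [hsym]
    exact (mul_le_mul_of_nonneg_left (min_le_right _ _) (by norm_num)).trans
      (four_mul_le_sin_two_pi_mul (by linarith) (by linarith))

theorem Real.two_div_le_sin_two_pi_mul_div {p k : ℕ} (hp : 0 < p) (hpk : 2 * p < k) :
    2 / k ≤ sin (2 * π * (p / k)) := by
  have hk : (0 : ℝ) < k := by exact_mod_cast hp.trans_le (by omega)
  have hp' : (1 : ℝ) ≤ p := by exact_mod_cast hp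
  have hpk' : 2 * (p : ℝ) + 1 ≤ k := by exact_mod_cast hpk
  have hmin : 1 / (2 * k) ≤ min ((p : ℝ) / k) (1 / 2 - p / k) := by
    refine le_min ?_ ?_
    · rw [div_le_div_iff₀ (by positivity) hk]; nlinarith
    · rw [le_sub_iff_add_le, div_add_div _ _ (by positivity) hk.ne',
        div_le_div_iff₀ (by positivity) (by norm_num)]
      nlinarith
  calc 2 / (k : ℝ) = 4 * (1 / (2 * k)) := by field_simp; norm_num
    _ ≤ 4 * min ((p : ℝ) / k) (1 / 2 - p / k) := by gcongr
    _ ≤ sin (2 * π * (p / k)) :=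
      four_mul_min_le_sin_two_pi_mul (by positivity) (by rw [div_le_iff₀ hk]; linarith)

theorem Real.sin_two_pi_mul_div_nonpos {p k : ℕ} (hpk : p ≤ k) (hkp : k ≤ 2 * p) :
    sin (2 * π * (p / k)) ≤ 0 := by
  rcases Nat.eq_zero_or_pos k with rfl | hk
  · simp
  have hk : (0 : ℝ) < k := by exact_mod_cast hk
  have h₁ : (p : ℝ) / k ≤ 1 := by rw [div_le_one hk]; exact_mod_cast hpk
  have h₂ : 1 / 2 ≤ (p : ℝ) / k := by
    rw [div_le_div_iff₀ (by norm_num) hk, one_mul]; exact_mod_cast (by omega : k ≤ p * 2)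
  rw [← sin_sub_two_pi]
  exact sin_nonpos_of_nonpos_of_neg_pi_le (by nlinarith [pi_pos]) (by nlinarith [pi_pos])

theorem sq_le_two_mul_triangle (k : ℕ) : k ^ 2 ≤ 2 * (k * (k + 1) / 2) := by
  have := Nat.div_mul_cancel (Nat.even_mul_succ_self k).two_dvd
  nlinarith

theorem im_ofReal_mul_exp_two_pi_I_mul (r q : ℝ) :
    ((r : ℂ) * exp (2 * π * I * q)).im = r * Real.sin (2 * π * q) := by
  rw [im_ofReal_mul, show 2 * π * I * q = ((2 * π * q : ℝ) : ℂ) * I by push_cast; ring,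
    exp_ofReal_mul_I_im]

theorem im_nonpos_or_one_le_im_of_mem_Lam {z : ℂ} (hz : z ∈ Lam) : z.im ≤ 0 ∨ 1 ≤ z.im := by
  obtain ⟨n, k, p, -, hk, hpk, rfl, rfl⟩ := hz
  rw [show (p : ℂ) / k = ((p / k : ℝ) : ℂ) by push_cast; rfl, im_ofReal_mul_exp_two_pi_I_mul]
  rcases Nat.eq_zero_or_pos p with rfl | hp
  · simp
  rcases lt_or_ge (2 * p) k with h | h
  · right
    have hk' : (0 : ℝ) < k := by exact_mod_cast hk
    have hn : (k : ℝ) / 2 ≤ √(k * (k + 1) / 2 + p : ℕ) := by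
      rw [le_sqrt (by positivity) (by positivity), div_pow]
      have := sq_le_two_mul_triangle k
      rw [div_le_iff₀ (by norm_num)]
      exact_mod_cast (by omega : k ^ 2 ≤ _ * 4)
    calc (1 : ℝ) = k / 2 * (2 / k) := by field_simp
      _ ≤ _ := mul_le_mul hn (two_div_le_sin_two_pi_mul_div hp h) (by positivity) (by positivity)
  · exact .inl (mul_nonpos_of_nonneg_of_nonpos (sqrt_nonneg _) (sin_two_pi_mul_div_nonpos hpk h))

theorem half_le_norm_mk_add_ofReal_sub_of_im_notMem_Ioo {δ : ℝ} {z : ℂ}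
    (hz : z.im ∉ Set.Ioo 0 δ) (x t : ℝ) : δ / 2 ≤ ‖Complex.mk x (δ / 2) + t - z‖ := by
  refine le_trans ?_ (abs_im_le_norm _)
  simp only [sub_im, add_im, ofReal_im, add_zero]
  rw [Set.mem_Ioo, not_and_or, not_lt, not_lt] at hz
  rcases hz with hz | hz
  · exact le_abs.2 (.inl (by linarith))
  · exact le_abs.2 (.inr (by linarith))

/-- The spiral `Λ` has a non-empty set of visible points: there is a vacant
horizontal strip `0 < y < δ`, and consequently every point `(x, δ/2)` is
visible in the horizontal direction `(1,0)`. -/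
theorem Lam_has_visible_points :
    ∃ δ > (0:ℝ), (∀ z ∈ Lam, ¬ (0 < z.im ∧ z.im < δ)) ∧
      ∀ x : ℝ, ∃ r > (0:ℝ), ∀ t : ℝ, 0 ≤ t → ∀ z ∈ Lam,
        z ≠ Complex.mk x (δ/2) →
          r ≤ ‖Complex.mk x (δ/2) + (t:ℂ) - z‖ := by
  have hstrip : ∀ z ∈ Lam, z.im ∉ Set.Ioo 0 1 := fun z hz ⟨h₀, h₁⟩ => by
    rcases im_nonpos_or_one_le_im_of_mem_Lam hz with h | h <;> linarith
  exact ⟨1, one_pos, hstrip, fun x => ⟨1 / 2, one_half_pos, fun t _ z hz _ =>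
    half_le_norm_mk_add_ofReal_sub_of_im_notMem_Ioo (hstrip z hz) x t⟩⟩
end
end

section
/- Let f: ℝ₊ → ℝ₊ be increasing and suppose the point set {f(n)·u_n : n ≥ 1} ⊂ ℝ^{d+1} (with u_n ∈ S^d) is uniformly discrete (the infimum of pairwise distances between distinct points is positive). Then liminf_{n→∞} f(n)/n^{1/(d+1)} > 0. -/
/-!
The points `f m • u m`, `1 ≤ m ≤ n`, are `r`-separated and lie in the ball of radius `f n`,
since `f` is increasing and `‖u m‖ = 1`. The disjoint balls of radius `r / 2` around them fit
in a ball of radius `f n + r / 2`, so comparing volumes in `ℝ^{d+1}` gives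
`n (r / 2)^{d+1} ≤ (f n + r / 2)^{d+1}`, i.e. `n^{1/(d+1)} r / 2 ≤ f n + r / 2`.
-/

open Filter Metric MeasureTheory

theorem card_mul_pow_le_of_pairwise_separated {E ι : Type*} [NormedAddCommGroup E]
    [NormedSpace ℝ E] [FiniteDimensional ℝ E] [Nontrivial E] {r R : ℝ} (hr : 0 < r)
    (hR : 0 ≤ R) (s : Finset ι) (p : ι → E) (hp : ∀ i ∈ s, ‖p i‖ ≤ R)
    (hsep : (s : Set ι).Pairwise fun i j => r ≤ dist (p i) (p j)) :
    (s.card : ℝ) * (r / 2) ^ Module.finrank ℝ E ≤ (R + r / 2) ^ Module.finrank ℝ E := by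
  borelize E
  set μ : Measure E := Measure.addHaar
  set k := Module.finrank ℝ E with hk
  have hdisj : (s : Set ι).PairwiseDisjoint fun i => ball (p i) (r / 2) :=
    fun i hi j hj hij => ball_disjoint_ball (by linarith [hsep hi hj hij])
  have hsub : (⋃ i ∈ s, ball (p i) (r / 2)) ⊆ ball 0 (R + r / 2) := by
    simp only [Set.iUnion_subset_iff]
    intro i hi x hx
    rw [mem_ball_zero_iff]
    calc ‖x‖ ≤ dist x (p i) + ‖p i‖ := by simpa using dist_triangle x (p i) 0
      _ < r / 2 + R := add_lt_add_of_lt_of_le (mem_ball.mp hx) (hp i hi)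
      _ = R + r / 2 := add_comm _ _
  have hvol : (s.card : ENNReal) * ENNReal.ofReal ((r / 2) ^ k) * μ (ball 0 1)
      ≤ ENNReal.ofReal ((R + r / 2) ^ k) * μ (ball 0 1) :=
    calc (s.card : ENNReal) * ENNReal.ofReal ((r / 2) ^ k) * μ (ball 0 1)
        = ∑ i ∈ s, μ (ball (p i) (r / 2)) := by
          simp only [μ.addHaar_ball _ (half_pos hr).le, Finset.sum_const, nsmul_eq_mul,
            mul_assoc, ← hk]
      _ = μ (⋃ i ∈ s, ball (p i) (r / 2)) :=
          (measure_biUnion_finset hdisj fun _ _ => measurableSet_ball).symm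
      _ ≤ μ (ball 0 (R + r / 2)) := measure_mono hsub
      _ = ENNReal.ofReal ((R + r / 2) ^ k) * μ (ball 0 1) := μ.addHaar_ball _ (by positivity)
  rw [ENNReal.mul_le_mul_iff_left (measure_ball_pos μ _ one_pos).ne' measure_ball_lt_top.ne,
    ← ENNReal.ofReal_natCast, ← ENNReal.ofReal_mul (by positivity)] at hvol
  exact (ENNReal.ofReal_le_ofReal_iff (by positivity)).mp hvol

theorem rpow_one_div_mul_le_of_mul_pow_le {a b c : ℝ} {k : ℕ} (hk : k ≠ 0) (ha : 0 ≤ a)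
    (hb : 0 ≤ b) (hc : 0 ≤ c) (h : a * b ^ k ≤ c ^ k) : a ^ (1 / (k : ℝ)) * b ≤ c := by
  rw [← pow_le_pow_iff_left₀ (by positivity) hc hk, mul_pow, one_div,
    Real.rpow_inv_natCast_pow ha hk]
  exact h

theorem eventually_half_le_div_of_mul_le_add {α : Type*} {l : Filter α} {g F : α → ℝ}
    {ρ : ℝ} (hρ : 0 < ρ) (hg : Tendsto g l atTop) (h : ∀ᶠ x in l, g x * ρ ≤ F x + ρ) :
    ∀ᶠ x in l, ρ / 2 ≤ F x / g x := by
  filter_upwards [hg.eventually_ge_atTop 2, h] with x hg2 hx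
  rw [le_div_iff₀ (by linarith)]
  nlinarith

theorem uniformly_discrete_liminf_positive (d : ℕ)
    (u : ℕ → EuclideanSpace ℝ (Fin (d+1))) (hu : ∀ n, ‖u n‖ = 1)
    (f : ℝ → ℝ) (hf0 : ∀ x ≥ (0:ℝ), 0 ≤ f x) (hf : MonotoneOn f (Set.Ici 0))
    (hdisc : ∃ r > (0:ℝ), ∀ m n : ℕ, 1 ≤ m → 1 ≤ n → m ≠ n →
      r ≤ ‖f m • u m - f n • u n‖) :
    ∃ c > (0:ℝ), ∀ᶠ n : ℕ in atTop,
      c ≤ f n / (n : ℝ) ^ ((1:ℝ)/((d:ℝ)+1)) := by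
  obtain ⟨r, hr, hsep⟩ := hdisc
  have hbound (n : ℕ) : (n : ℝ) ^ ((1:ℝ)/((d:ℝ)+1)) * (r / 2) ≤ f n + r / 2 := by
    have hnorm : ∀ m ∈ Finset.Icc 1 n, ‖f m • u m‖ ≤ f n := fun m hm => by
      rw [norm_smul, hu, mul_one, Real.norm_of_nonneg (hf0 _ m.cast_nonneg)]
      exact hf (Set.mem_Ici.mpr m.cast_nonneg) (Set.mem_Ici.mpr n.cast_nonneg)
        (by exact_mod_cast (Finset.mem_Icc.mp hm).2)
    have hpack := card_mul_pow_le_of_pairwise_separated hr (hf0 _ n.cast_nonneg)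
      (Finset.Icc 1 n) (fun m => f m • u m) hnorm fun i hi j hj hij => by
        rw [Finset.coe_Icc, Set.mem_Icc] at hi hj
        rw [dist_eq_norm]
        exact hsep i j hi.1 hj.1 hij
    rw [finrank_euclideanSpace_fin, Nat.card_Icc, Nat.add_sub_cancel] at hpack
    exact_mod_cast rpow_one_div_mul_le_of_mul_pow_le d.succ_ne_zero n.cast_nonneg
      (half_pos hr).le (add_nonneg (hf0 n n.cast_nonneg) (half_pos hr).le) hpack
  refine ⟨r / 2 / 2, by positivity, eventually_half_le_div_of_mul_le_add (half_pos hr) ?_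
    (Eventually.of_forall hbound)⟩
  exact (tendsto_rpow_atTop (by positivity)).comp tendsto_natCast_atTop_atTop
end

section
/- Let f: ℝ₊ → ℝ₊ be increasing and suppose {f(n)·u_n : n ≥ 1} ⊂ ℝ^{d+1} (with u_n ∈ S^d) is relatively dense (there is R > 0 such that every point of ℝ^{d+1} is within distance R of the set). Then limsup_{n→∞} f(n)/n^{1/(d+1)} < ∞. -/
/-!
Every point of the ball of radius `f N - R - 1` about the origin is `R`-close to some `f n • u n`,
and then `f n < f N`, so `n < N` by monotonicity: the ball is covered by the `N` balls of
radius `R` around the first `N` points. Comparing volumes gives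
`(f N - R - 1) ^ (d + 1) ≤ N * R ^ (d + 1)`, i.e. `f N = O(N ^ (1 / (d + 1)))`.
-/

open Filter Metric MeasureTheory Module Finset

theorem pow_finrank_le_card_mul_of_closedBall_subset_biUnion {E ι : Type*}
    [NormedAddCommGroup E] [NormedSpace ℝ E] [FiniteDimensional ℝ E]
    {x : E} {r R : ℝ} (hr : 0 ≤ r) (hR : 0 ≤ R) {s : Finset ι} {c : ι → E}
    (hcover : closedBall x r ⊆ ⋃ i ∈ s, closedBall (c i) R) :
    r ^ finrank ℝ E ≤ #s * R ^ finrank ℝ E := by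
  borelize E
  set μ : Measure E := Measure.addHaar
  have hunit : 0 < μ.real (ball 0 1) :=
    ENNReal.toReal_pos (measure_ball_pos μ 0 one_pos).ne' measure_ball_lt_top.ne
  have hvol : μ.real (closedBall x r) ≤ ∑ i ∈ s, μ.real (closedBall (c i) R) :=
    (measureReal_mono hcover
      (measure_biUnion_lt_top s.finite_toSet fun _ _ => measure_closedBall_lt_top).ne).trans
      (measureReal_biUnion_finset_le _ _)
  simp only [Measure.addHaar_real_closedBall μ _ hr, Measure.addHaar_real_closedBall μ _ hR,
    sum_const, nsmul_eq_mul] at hvol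
  rw [← mul_assoc] at hvol
  exact le_of_mul_le_mul_right hvol hunit

theorem le_rpow_inv_mul_of_pow_le {r R a : ℝ} {k : ℕ} (hk : k ≠ 0) (hr : 0 ≤ r)
    (hR : 0 ≤ R) (ha : 0 ≤ a) (h : r ^ k ≤ a * R ^ k) : r ≤ a ^ (k⁻¹ : ℝ) * R := by
  rwa [← pow_le_pow_iff_left₀ hr (by positivity) hk, mul_pow, Real.rpow_inv_natCast_pow ha hk]

theorem closedBall_subset_biUnion_range {E : Type*} [SeminormedAddCommGroup E] {p : ℕ → E}
    {g : ℕ → ℝ} (hg : Monotone g) (hgp : ∀ n, g n ≤ ‖p n‖) {R r : ℝ}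
    (hdense : ∀ x, ∃ n, ‖x - p n‖ ≤ R) {N : ℕ} (hN : r + R < g N) :
    closedBall 0 r ⊆ ⋃ n ∈ range N, closedBall (p n) R := by
  intro x hx
  obtain ⟨n, hn⟩ := hdense x
  have hgn : g n < g N := calc
    g n ≤ ‖p n‖ := hgp n
    _ ≤ ‖x‖ + ‖x - p n‖ := norm_le_norm_add_norm_sub x (p n)
    _ ≤ r + R := add_le_add (mem_closedBall_zero_iff.mp hx) hn
    _ < g N := hN
  exact Set.mem_biUnion (mem_range.mpr (hg.reflect_lt hgn)) (mem_closedBall_iff_norm.mpr hn)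

theorem relatively_dense_limsup_finite_general (d : ℕ)
    (u : ℕ → EuclideanSpace ℝ (Fin (d+1))) (hu : ∀ n, ‖u n‖ = 1)
    (f : ℝ → ℝ) (hf : MonotoneOn f (Set.Ici 0))
    (hdense : ∃ R > (0:ℝ), ∀ x : EuclideanSpace ℝ (Fin (d+1)),
      ∃ n : ℕ, 1 ≤ n ∧ ‖x - f n • u n‖ ≤ R) :
    ∃ C : ℝ, ∀ᶠ n : ℕ in atTop,
      f n / (n : ℝ) ^ ((1:ℝ)/((d:ℝ)+1)) ≤ C := by
  obtain ⟨R, hR, hd⟩ := hdense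
  have hmono : Monotone fun n : ℕ => f n := fun m n hmn =>
    hf (Set.mem_Ici.2 m.cast_nonneg) (Set.mem_Ici.2 n.cast_nonneg) (by exact_mod_cast hmn)
  have hnorm (n : ℕ) : f n ≤ ‖f n • u n‖ := by
    rw [norm_smul, hu, mul_one]
    exact le_abs_self _
  have hcover (x : EuclideanSpace ℝ (Fin (d + 1))) : ∃ n : ℕ, ‖x - f n • u n‖ ≤ R :=
    (hd x).imp fun _ h => h.2
  have hexp : ((d + 1 : ℕ) : ℝ)⁻¹ = 1 / ((d : ℝ) + 1) := by push_cast; ring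
  refine ⟨2 * R + 1, eventually_atTop.2 ⟨1, fun N hN => ?_⟩⟩
  have hNp : 1 ≤ (N : ℝ) ^ (1 / ((d : ℝ) + 1)) :=
    Real.one_le_rpow (by exact_mod_cast hN) (by positivity)
  rw [div_le_iff₀ (by positivity)]
  suffices f N ≤ (N : ℝ) ^ (1 / ((d : ℝ) + 1)) * R + R + 1 by nlinarith
  by_cases hsmall : f N ≤ R + 1
  · nlinarith
  have hr : 0 ≤ f N - R - 1 := by linarith
  have hvol := pow_finrank_le_card_mul_of_closedBall_subset_biUnion hr hR.le
    (closedBall_subset_biUnion_range hmono hnorm hcover (N := N) (by linarith))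
  rw [finrank_euclideanSpace_fin, card_range] at hvol
  have := le_rpow_inv_mul_of_pow_le d.succ_ne_zero hr hR.le N.cast_nonneg hvol
  rw [hexp] at this
  linarith

theorem relatively_dense_limsup_finite (d : ℕ)
    (u : ℕ → EuclideanSpace ℝ (Fin (d+1))) (hu : ∀ n, ‖u n‖ = 1)
    (f : ℝ → ℝ) (hf0 : ∀ x ≥ (0:ℝ), 0 ≤ f x) (hf : MonotoneOn f (Set.Ici 0))
    (hdense : ∃ R > (0:ℝ), ∀ x : EuclideanSpace ℝ (Fin (d+1)),
      ∃ n : ℕ, 1 ≤ n ∧ ‖x - f n • u n‖ ≤ R) :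
    ∃ C : ℝ, ∀ᶠ n : ℕ in atTop,
      f n / (n : ℝ) ^ ((1:ℝ)/((d:ℝ)+1)) ≤ C :=
  relatively_dense_limsup_finite_general d u hu f hf hdense
end
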